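/- Assume λ > 0. The point (0,0,0) (zero vector b, zero vector z, zero matrix B) is an optimal solution to the SDP relaxation if and only if there exists δ ∈ ℝ^p such that XᵀX − diag(δ) ⪰ 0 and for every i, δᵢ ≥ 0, 2λδᵢ ≥ (Xᵀy)ᵢ². -/

import Mathlib

/-! Write `M = XᵀX` and `c = Xᵀy`; the objective exceeds its value at the origin by
`½⟨M, B⟩ − c·b + λ∑ zᵢ`. Given a certificate `δ`, this is nonnegative on the feasible set:
`⟨M, B⟩ ≥ ∑ δᵢ Bᵢᵢ` because `M − diag δ` and `B` are positive semidefinite, and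
`cᵢ bᵢ ≤ ½ δᵢ Bᵢᵢ + λ zᵢ` by AM–GM, using `bᵢ² ≤ zᵢ Bᵢᵢ` from the 2×2 blocks. Conversely, if the
origin is optimal, compare it with `b = t (r ∘ v)`, `z = t r²`, `B = t vvᵀ + bbᵀ`, where
`rᵢ = cᵢ vᵢ / (2λ)`: the increment is `(t/2) vᵀ (M − diag(c² / 2λ)) v + O(t²)`, so letting `t → 0⁺`
shows that `δᵢ = cᵢ² / (2λ)` is a certificate. -/

open Matrix Finset

def SDPfeas {p : ℕ} (b z : Fin p → ℝ) (B : Matrix (Fin p) (Fin p) ℝ) : Prop :=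
  (B - Matrix.vecMulVec b b).PosSemidef ∧
    ∀ i, (!![z i, b i; b i, B i i] : Matrix (Fin 2) (Fin 2) ℝ).PosSemidef

noncomputable def sdpObj {n p : ℕ} (X : Matrix (Fin n) (Fin p) ℝ) (y : Fin n → ℝ)
    (lam : ℝ) (b z : Fin p → ℝ) (B : Matrix (Fin p) (Fin p) ℝ) : ℝ :=
  (1/2) * ∑ i, ∑ j, (Xᵀ * X) i j * B i j - y ⬝ᵥ X.mulVec b
    + (1/2) * (y ⬝ᵥ y) + lam * ∑ i, z i

section Pairing

variable {ι : Type*} [Fintype ι]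

/-- The sum is `1ᵀ (A ⊙ B) 1`, so this is the Schur product theorem. -/
lemma sum_sum_mul_nonneg_of_posSemidef {A B : Matrix ι ι ℝ} (hA : A.PosSemidef)
    (hB : B.PosSemidef) : 0 ≤ ∑ i, ∑ j, A i j * B i j := by
  simpa [dotProduct, mulVec, hadamard] using
    (hA.hadamard hB).dotProduct_mulVec_nonneg (fun _ => 1)

lemma sum_sum_mul_vecMulVec (M : Matrix ι ι ℝ) (u : ι → ℝ) :
    ∑ i, ∑ j, M i j * vecMulVec u u i j = u ⬝ᵥ M *ᵥ u := by
  simp only [vecMulVec_apply, dotProduct, mulVec, Finset.mul_sum]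
  exact Finset.sum_congr rfl fun i _ => Finset.sum_congr rfl fun j _ => by ring

lemma sum_sum_diagonal_mul [DecidableEq ι] (δ : ι → ℝ) (B : Matrix ι ι ℝ) :
    ∑ i, ∑ j, diagonal δ i j * B i j = ∑ i, δ i * B i i := by
  simp [diagonal_apply]

lemma sum_sum_mul_add (M A B : Matrix ι ι ℝ) :
    ∑ i, ∑ j, M i j * (A + B) i j = ∑ i, ∑ j, M i j * A i j + ∑ i, ∑ j, M i j * B i j := by
  simp only [Matrix.add_apply, mul_add, Finset.sum_add_distrib]

lemma sum_sum_mul_smul (M A : Matrix ι ι ℝ) (t : ℝ) :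
    ∑ i, ∑ j, M i j * (t • A) i j = t * ∑ i, ∑ j, M i j * A i j := by
  simp only [Matrix.smul_apply, smul_eq_mul, Finset.mul_sum]
  exact Finset.sum_congr rfl fun i _ => Finset.sum_congr rfl fun j _ => by ring

end Pairing

lemma posSemidef_fin_two_iff {a b d : ℝ} :
    (!![a, b; b, d] : Matrix (Fin 2) (Fin 2) ℝ).PosSemidef ↔ 0 ≤ a ∧ 0 ≤ d ∧ b ^ 2 ≤ a * d := by
  have hherm : (!![a, b; b, d] : Matrix (Fin 2) (Fin 2) ℝ).IsHermitian := by
    ext i j; fin_cases i <;> fin_cases j <;> simp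
  have hquad (s t : ℝ) : star ![s, t] ⬝ᵥ !![a, b; b, d] *ᵥ ![s, t]
      = a * s ^ 2 + 2 * b * s * t + d * t ^ 2 := by
    simp only [dotProduct, mulVec, Fin.sum_univ_two, star_trivial, of_apply, cons_val',
      cons_val_fin_one, cons_val_zero, cons_val_one]
    ring
  rw [posSemidef_iff_dotProduct_mulVec, and_iff_right hherm]
  constructor
  · intro h
    have q (s t : ℝ) : 0 ≤ a * s ^ 2 + 2 * b * s * t + d * t ^ 2 := hquad s t ▸ h ![s, t]
    have ha : 0 ≤ a := by linarith [q 1 0]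
    have hd : 0 ≤ d := by linarith [q 0 1]
    refine ⟨ha, hd, ?_⟩
    rcases ha.eq_or_lt with rfl | ha
    · nlinarith [q (-(d + 1)) b]
    · nlinarith [q b (-a)]
  · rintro ⟨ha, hd, hb⟩ x
    have hx : x = ![x 0, x 1] := by ext i; fin_cases i <;> rfl
    rw [hx, hquad]
    rcases ha.eq_or_lt with rfl | ha
    · obtain rfl : b = 0 := by nlinarith
      simp only [zero_mul, mul_zero, zero_add]
      positivity
    · have hQ : a * (a * x 0 ^ 2 + 2 * b * x 0 * x 1 + d * x 1 ^ 2)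
          = (a * x 0 + b * x 1) ^ 2 + (a * d - b ^ 2) * x 1 ^ 2 := by ring
      have : 0 ≤ a * (a * x 0 ^ 2 + 2 * b * x 0 * x 1 + d * x 1 ^ 2) := by
        rw [hQ]; have := sub_nonneg.2 hb; positivity
      exact nonneg_of_mul_nonneg_right this ha

lemma nonneg_of_forall_pos_nonneg_mul_add_sq_mul {a C : ℝ} (h : ∀ t > 0, 0 ≤ t * a + t ^ 2 * C) :
    0 ≤ a := by
  have hlim : Filter.Tendsto (fun t => a + t * C) (nhdsWithin 0 (Set.Ioi 0)) (nhds a) :=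
    ((continuous_const.add (continuous_id.mul continuous_const)).tendsto' 0 a
      (by simp)).mono_left nhdsWithin_le_nhds
  refine ge_of_tendsto hlim (eventually_nhdsWithin_of_forall fun t (ht : 0 < t) => ?_)
  refine nonneg_of_mul_nonneg_right ?_ ht
  linarith [h t ht]

lemma mul_le_half_mul_add_mul {lam δ z β b c : ℝ} (hlam : 0 ≤ lam) (hδ : 0 ≤ δ) (hz : 0 ≤ z)
    (hβ : 0 ≤ β) (hb : b ^ 2 ≤ z * β) (hc : c ^ 2 ≤ 2 * lam * δ) :
    c * b ≤ δ * β / 2 + lam * z := by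
  have hsq : (c * b) ^ 2 ≤ (δ * β / 2 + lam * z) ^ 2 := by
    calc (c * b) ^ 2 = c ^ 2 * b ^ 2 := by ring
      _ ≤ (2 * lam * δ) * (z * β) := mul_le_mul hc hb (sq_nonneg b) (by positivity)
      _ ≤ (δ * β / 2 + lam * z) ^ 2 := by nlinarith [sq_nonneg (δ * β / 2 - lam * z)]
  exact (abs_le_of_sq_le_sq' hsq (by positivity)).2

/-- `sdpObj X y lam b z B - sdpObj X y lam 0 0 0`, written for `M = XᵀX` and `c = Xᵀy`. -/
noncomputable def sdpIncrement {p : ℕ} (M : Matrix (Fin p) (Fin p) ℝ) (c : Fin p → ℝ) (lam : ℝ)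
    (b z : Fin p → ℝ) (B : Matrix (Fin p) (Fin p) ℝ) : ℝ :=
  (1 / 2) * ∑ i, ∑ j, M i j * B i j - c ⬝ᵥ b + lam * ∑ i, z i

lemma sdpObj_zero_le_iff {n p : ℕ} (X : Matrix (Fin n) (Fin p) ℝ) (y : Fin n → ℝ)
    (lam : ℝ) (b z : Fin p → ℝ) (B : Matrix (Fin p) (Fin p) ℝ) :
    sdpObj X y lam 0 0 0 ≤ sdpObj X y lam b z B ↔
      0 ≤ sdpIncrement (Xᵀ * X) (Xᵀ *ᵥ y) lam b z B := by
  have : sdpObj X y lam b z B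
      = sdpObj X y lam 0 0 0 + sdpIncrement (Xᵀ * X) (Xᵀ *ᵥ y) lam b z B := by
    simp only [sdpObj, sdpIncrement, dotProduct_mulVec, ← mulVec_transpose, Matrix.zero_apply,
      mul_zero, Finset.sum_const_zero, dotProduct_zero, Pi.zero_apply]
    ring
  rw [this, le_add_iff_nonneg_right]

section Feasibility

variable {p : ℕ}

lemma sdpFeas_zero : SDPfeas (0 : Fin p → ℝ) 0 0 := by
  refine ⟨by simpa using PosSemidef.zero, fun i => ?_⟩
  simpa using (posSemidef_fin_two_iff (a := 0) (b := 0) (d := 0)).2 (by simp)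

lemma SDPfeas.posSemidef {b z : Fin p → ℝ} {B : Matrix (Fin p) (Fin p) ℝ} (h : SDPfeas b z B) :
    B.PosSemidef := by
  simpa using h.1.add (posSemidef_vecMulVec_self_star b)

lemma sdpIncrement_nonneg_of_certificate {M : Matrix (Fin p) (Fin p) ℝ} {c δ : Fin p → ℝ}
    {lam : ℝ} (hlam : 0 ≤ lam) (hcert : (M - diagonal δ).PosSemidef)
    (hδ : ∀ i, 0 ≤ δ i ∧ c i ^ 2 ≤ 2 * lam * δ i) {b z : Fin p → ℝ}
    {B : Matrix (Fin p) (Fin p) ℝ} (hfeas : SDPfeas b z B) : 0 ≤ sdpIncrement M c lam b z B := by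
  have hdiag : ∑ i, δ i * B i i ≤ ∑ i, ∑ j, M i j * B i j := by
    have := sum_sum_mul_nonneg_of_posSemidef hcert hfeas.posSemidef
    simp only [Matrix.sub_apply, sub_mul, Finset.sum_sub_distrib, sum_sum_diagonal_mul] at this
    linarith
  have hlin : c ⬝ᵥ b ≤ ∑ i, (δ i * B i i / 2 + lam * z i) := by
    refine Finset.sum_le_sum fun i _ => ?_
    obtain ⟨hz, hB, hb⟩ := posSemidef_fin_two_iff.1 (hfeas.2 i)
    exact mul_le_half_mul_add_mul hlam (hδ i).1 hz hB hb (hδ i).2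
  rw [Finset.sum_add_distrib, ← Finset.sum_div, ← Finset.mul_sum] at hlin
  unfold sdpIncrement
  linarith

lemma sdpFeas_testPoint (v r : Fin p → ℝ) {t : ℝ} (ht : 0 ≤ t) :
    SDPfeas (t • (r * v)) (t • r ^ 2)
      (t • vecMulVec v v + vecMulVec (t • (r * v)) (t • (r * v))) := by
  refine ⟨by simpa using (posSemidef_vecMulVec_self_star v).smul ht,
    fun i => posSemidef_fin_two_iff.2 ?_⟩
  simp only [Matrix.add_apply, Matrix.smul_apply, vecMulVec_apply, Pi.smul_apply, Pi.mul_apply,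
    Pi.pow_apply, smul_eq_mul, ← sq]
  have : 0 ≤ t ^ 3 * r i ^ 4 * v i ^ 2 := by positivity
  exact ⟨by positivity, by positivity, by nlinarith⟩

lemma sdpIncrement_testPoint (M : Matrix (Fin p) (Fin p) ℝ) (c : Fin p → ℝ) (lam : ℝ)
    (v r : Fin p → ℝ) (t : ℝ) :
    sdpIncrement M c lam (t • (r * v)) (t • r ^ 2)
        (t • vecMulVec v v + vecMulVec (t • (r * v)) (t • (r * v)))
      = t * ((1 / 2) * (v ⬝ᵥ M *ᵥ v) - (c ⬝ᵥ (r * v) - lam * ∑ i, r i ^ 2))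
        + t ^ 2 * ((1 / 2) * ((r * v) ⬝ᵥ M *ᵥ (r * v))) := by
  simp only [sdpIncrement, sum_sum_mul_add, sum_sum_mul_smul, sum_sum_mul_vecMulVec, mulVec_smul,
    dotProduct_smul, smul_dotProduct, smul_eq_mul, Pi.smul_apply, Pi.pow_apply,
    ← Finset.mul_sum]
  ring

lemma posSemidef_sub_diagonal_of_sdpIncrement_nonneg {M : Matrix (Fin p) (Fin p) ℝ}
    (hM : M.IsHermitian) {c : Fin p → ℝ} {lam : ℝ} (hlam : 0 < lam)
    (h : ∀ b z B, SDPfeas b z B → 0 ≤ sdpIncrement M c lam b z B) :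
    (M - diagonal (fun i => c i ^ 2 / (2 * lam))).PosSemidef := by
  refine posSemidef_iff_dotProduct_mulVec.2 ⟨hM.sub (isHermitian_diagonal _), fun v => ?_⟩
  set r : Fin p → ℝ := fun i => c i * v i / (2 * lam)
  have hr : c ⬝ᵥ (r * v) - lam * ∑ i, r i ^ 2
      = (1 / 2) * (v ⬝ᵥ diagonal (fun i => c i ^ 2 / (2 * lam)) *ᵥ v) := by
    simp only [r, dotProduct, mulVec_diagonal, Pi.mul_apply, Finset.mul_sum,
      ← Finset.sum_sub_distrib]
    refine Finset.sum_congr rfl fun i _ => ?_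
    field_simp
    ring
  have := nonneg_of_forall_pos_nonneg_mul_add_sq_mul fun t ht => by
    have := h _ _ _ (sdpFeas_testPoint v r ht.le)
    rwa [sdpIncrement_testPoint, hr] at this
  simp only [star_trivial, sub_mulVec, dotProduct_sub]
  linarith

end Feasibility

theorem stmt14_general (n p : ℕ) (X : Matrix (Fin n) (Fin p) ℝ) (y : Fin n → ℝ)
    (lam : ℝ) (hlam : 0 < lam) :
    (SDPfeas (0 : Fin p → ℝ) 0 0 ∧
      ∀ (b z : Fin p → ℝ) (B : Matrix (Fin p) (Fin p) ℝ), SDPfeas b z B →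
        sdpObj X y lam (0 : Fin p → ℝ) 0 0 ≤ sdpObj X y lam b z B)
    ↔ ∃ δ : Fin p → ℝ, (Xᵀ * X - Matrix.diagonal δ).PosSemidef ∧
        ∀ i, 0 ≤ δ i ∧ (Xᵀ.mulVec y i)^2 ≤ 2 * lam * δ i := by
  simp only [sdpObj_zero_le_iff]
  constructor
  · rintro ⟨-, hopt⟩
    refine ⟨fun i => (Xᵀ *ᵥ y) i ^ 2 / (2 * lam),
      posSemidef_sub_diagonal_of_sdpIncrement_nonneg
        (by simpa using isHermitian_conjTranspose_mul_self X) hlam hopt,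
      fun i => ⟨by positivity, by field_simp; rfl⟩⟩
  · rintro ⟨δ, hcert, hδ⟩
    exact ⟨sdpFeas_zero, fun b z B hfeas =>
      sdpIncrement_nonneg_of_certificate hlam.le hcert hδ hfeas⟩

/-- `(0,0,0)` is optimal for the SDP relaxation iff there is `δ`
with `XᵀX − diag(δ) ⪰ 0`, `δᵢ ≥ 0` and `2λδᵢ ≥ (Xᵀy)ᵢ²` for all `i`. -/
theorem stmt14 (n p : ℕ) (X : Matrix (Fin n) (Fin p) ℝ) (y : Fin n → ℝ)
    (lam : ℝ) (hlam : 0 < lam) (hpd : (Xᵀ * X).PosDef) :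
    (SDPfeas (0 : Fin p → ℝ) 0 0 ∧
      ∀ (b z : Fin p → ℝ) (B : Matrix (Fin p) (Fin p) ℝ), SDPfeas b z B →
        sdpObj X y lam (0 : Fin p → ℝ) 0 0 ≤ sdpObj X y lam b z B)
    ↔ ∃ δ : Fin p → ℝ, (Xᵀ * X - Matrix.diagonal δ).PosSemidef ∧
        ∀ i, 0 ≤ δ i ∧ (Xᵀ.mulVec y i)^2 ≤ 2 * lam * δ i :=
  stmt14_general n p X y lam hlam
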